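/- Let D be an E-simple domain with maximal subfield K, and let f, g ∈ D \ K be algebraically dependent over K. Then p_f = p_g in R(D). In particular, if g ∈ K[f] \ K then p_f = p_g. -/

import Mathlib

noncomputable def recip (D : Type*) [CommRing D] [IsDomain D] : Subring (FractionRing D) :=
  Subring.closure {x | ∃ d : D, d ≠ 0 ∧ x = (algebraMap D (FractionRing D) d)⁻¹}

/-- `D` is E-simple: every nonzero Egyptian element is a unit. -/
def ESimple (D : Type*) [CommRing D] [IsDomain D] : Prop :=
  ∀ d : D, d ≠ 0 → algebraMap D (FractionRing D) d ∈ recip D → IsUnit d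

/-- `d` lies in the maximal subfield `K` of an E-simple domain `D`: it is `0` or
Egyptian. -/
def InMaxSubfield {D : Type*} [CommRing D] [IsDomain D] (d : D) : Prop :=
  algebraMap D (FractionRing D) d ∈ recip D

/-- `p` is the prime ideal `p_x` of `R(D)`: the unique prime maximal with respect to
not containing `1/x`. -/
def IsPx {D : Type*} [CommRing D] [IsDomain D] (x : D) (hx : x ≠ 0)
    (p : Ideal (recip D)) : Prop :=
  p.IsPrime ∧
  (⟨(algebraMap D (FractionRing D) x)⁻¹,
    Subring.subset_closure ⟨x, hx, rfl⟩⟩ : recip D) ∉ p ∧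
  ∀ q : Ideal (recip D), q.IsPrime →
    (⟨(algebraMap D (FractionRing D) x)⁻¹,
      Subring.subset_closure ⟨x, hx, rfl⟩⟩ : recip D) ∉ q → q ≤ p

/-!
Fix a prime `q` of `R(D)` with `1/f ∉ q`. For nonzero `c = u + d f` with `u ∈ K` one has
`1/c = (1/f - u · 1/c · 1/f) · 1/d`, so if `1/c ∈ q` then `1/d ∈ q` or `1/f ∈ q`; by induction
on the degree, `1/c ∉ q` for every nonzero `c ∈ K[f]`.

E-simplicity makes `f ∉ K` transcendental over `K`: a relation with a nonzero constant term
`u₀ = -f · s` would make `f` a unit, hence Egyptian. So a nontrivial relation `∑ⱼ cⱼ gʲ = 0`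
with `cⱼ ∈ K[f]` has a nonzero coefficient; the lowest one is divisible by `g`, so `1/cⱼ` is a
multiple of `1/g`, and `1/g ∉ q`. For `q = p_f` the maximality of `p_g` gives `p_f ≤ p_g`, and
the argument is symmetric in `f` and `g`.
-/

lemma inv_add_mul_eq {K : Type*} [Field K] {u d f : K} (hf : f ≠ 0) (hd : d ≠ 0)
    (hc : u + d * f ≠ 0) :
    (u + d * f)⁻¹ = (f⁻¹ - u * (u + d * f)⁻¹ * f⁻¹) * d⁻¹ := by
  rw [mul_comm d f] at hc ⊢
  field_simp
  ring

lemma algebraMap_fractionRing_ne_zero {D : Type*} [CommRing D] {d : D} (hd : d ≠ 0) :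
    algebraMap D (FractionRing D) d ≠ 0 :=
  (map_ne_zero_iff _ (IsFractionRing.injective D (FractionRing D))).mpr hd

section RecipInv

variable {D : Type*} [CommRing D] [IsDomain D]

lemma inv_algebraMap_mem_recip (d : D) : (algebraMap D (FractionRing D) d)⁻¹ ∈ recip D := by
  rcases eq_or_ne d 0 with rfl | hd
  · simp [(recip D).zero_mem]
  · exact Subring.subset_closure ⟨d, hd, rfl⟩

/-- `1/d` in `R(D)`, with `1/0 = 0`; thus `recipInv d ∉ q` for an ideal `q` forces `d ≠ 0`. -/
noncomputable def recipInv (d : D) : recip D :=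
  ⟨(algebraMap D (FractionRing D) d)⁻¹, inv_algebraMap_mem_recip d⟩

@[simp]
lemma coe_recipInv (d : D) :
    (recipInv d : FractionRing D) = (algebraMap D (FractionRing D) d)⁻¹ := rfl

lemma recipInv_mul (a b : D) : recipInv (a * b) = recipInv a * recipInv b :=
  Subtype.ext <| by simp only [coe_recipInv, MulMemClass.coe_mul, map_mul, mul_inv]

@[simp]
lemma recipInv_zero : recipInv (0 : D) = 0 :=
  Subtype.ext <| by simp

lemma ne_zero_of_recipInv_notMem {q : Ideal (recip D)} {d : D} (h : recipInv d ∉ q) :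
    d ≠ 0 := by
  rintro rfl
  exact h (recipInv_zero (D := D) ▸ q.zero_mem)

lemma isUnit_recipInv {u : D} (hu : InMaxSubfield u) (hu0 : u ≠ 0) : IsUnit (recipInv u) :=
  IsUnit.of_mul_eq_one ⟨_, hu⟩ <| Subtype.ext <| by
    simp [algebraMap_fractionRing_ne_zero hu0]

lemma inMaxSubfield_zero : InMaxSubfield (0 : D) := by
  simp [InMaxSubfield, (recip D).zero_mem]

lemma inMaxSubfield_of_isUnit {d : D} (hd : IsUnit d) : InMaxSubfield d := by
  obtain ⟨v, hv⟩ := hd.exists_right_inv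
  have hdv : algebraMap D (FractionRing D) d = (algebraMap D (FractionRing D) v)⁻¹ :=
    eq_inv_of_mul_eq_one_left (by rw [← map_mul, hv, map_one])
  rw [InMaxSubfield, hdv]
  exact inv_algebraMap_mem_recip v

end RecipInv

lemma Fin.sum_mul_pow_succ {R : Type*} [CommSemiring R] {n : ℕ} (u : Fin (n + 1) → R) (x : R) :
    ∑ i, u i * x ^ (i : ℕ) = u 0 + (∑ i : Fin n, u i.succ * x ^ (i : ℕ)) * x := by
  simp [Fin.sum_univ_succ, Finset.sum_mul, pow_succ, mul_assoc]

lemma exists_ne_zero_dvd_of_sum_mul_pow_eq_zero {R : Type*} [CommRing R] [IsDomain R]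
    {g : R} (hg : g ≠ 0) {m : ℕ} (c : Fin m → R) (hrel : ∑ j, c j * g ^ (j : ℕ) = 0)
    (hc : c ≠ 0) : ∃ j, c j ≠ 0 ∧ g ∣ c j := by
  induction m with
  | zero => exact absurd (Subsingleton.elim c 0) hc
  | succ m ih =>
    rw [Fin.sum_mul_pow_succ] at hrel
    by_cases hc0 : c 0 = 0
    · rw [hc0, zero_add, mul_eq_zero, or_iff_left hg] at hrel
      have hc' : (fun j : Fin m => c j.succ) ≠ 0 := fun h =>
        hc (funext (Fin.cases hc0 (congrFun h)))
      obtain ⟨j, hj, hdvd⟩ := ih _ hrel hc'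
      exact ⟨j.succ, hj, hdvd⟩
    · exact ⟨0, hc0, -∑ i : Fin m, c i.succ * g ^ (i : ℕ), by linear_combination hrel⟩

section ESimple

variable {D : Type*} [CommRing D] [IsDomain D]

lemma ESimple.eq_zero_of_sum_mul_pow_eq_zero (hD : ESimple D) {f : D}
    (hfK : ¬ InMaxSubfield f) {n : ℕ} (u : Fin n → D) (hu : ∀ i, InMaxSubfield (u i))
    (hrel : ∑ i, u i * f ^ (i : ℕ) = 0) : u = 0 := by
  have hf : f ≠ 0 := by rintro rfl; exact hfK inMaxSubfield_zero
  induction n with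
  | zero => exact Subsingleton.elim _ _
  | succ n ih =>
    rw [Fin.sum_mul_pow_succ] at hrel
    have hu0 : u 0 = 0 := by
      by_contra hu0
      have hfactor : u 0 = f * -∑ i : Fin n, u i.succ * f ^ (i : ℕ) := by
        linear_combination hrel
      have hunit := hfactor ▸ hD _ hu0 (hu 0)
      exact hfK (inMaxSubfield_of_isUnit (isUnit_of_mul_isUnit_left hunit))
    rw [hu0, zero_add, mul_eq_zero, or_iff_left hf] at hrel
    have htail := ih (fun i => u i.succ) (fun i => hu i.succ) hrel
    exact funext (Fin.cases hu0 (congrFun htail))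

variable {q : Ideal (recip D)} {f : D}

lemma recipInv_add_mul_notMem (hq : q.IsPrime) (hfq : recipInv f ∉ q) {u d : D}
    (hu : InMaxSubfield u) (hd : d = 0 ∨ recipInv d ∉ q) (hc : u + d * f ≠ 0) :
    recipInv (u + d * f) ∉ q := by
  rcases hd with rfl | hdq
  · rw [zero_mul, add_zero] at hc ⊢
    exact fun h => hq.ne_top (q.eq_top_of_isUnit_mem h (isUnit_recipInv hu hc))
  intro hcq
  have hf := ne_zero_of_recipInv_notMem hfq
  have hd := ne_zero_of_recipInv_notMem hdq
  have key : (recipInv f - ⟨_, hu⟩ * recipInv (u + d * f) * recipInv f) * recipInv d =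
      recipInv (u + d * f) := by
    apply Subtype.ext
    have hcK := algebraMap_fractionRing_ne_zero hc
    simp only [map_add, map_mul] at hcK
    simp only [coe_recipInv, MulMemClass.coe_mul, AddSubgroupClass.coe_sub, map_add, map_mul]
    exact (inv_add_mul_eq (algebraMap_fractionRing_ne_zero hf)
      (algebraMap_fractionRing_ne_zero hd) hcK).symm
  rcases hq.mem_or_mem (key ▸ hcq) with h | h
  · have hrest := q.mul_mem_right (recipInv f) (q.mul_mem_left ⟨_, hu⟩ hcq)
    exact hfq (by simpa using q.add_mem h hrest)
  · exact hdq h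

lemma recipInv_notMem_of_sum_mul_pow (hq : q.IsPrime) (hfq : recipInv f ∉ q) {n : ℕ}
    (u : Fin n → D) (hu : ∀ i, InMaxSubfield (u i)) (hc : ∑ i, u i * f ^ (i : ℕ) ≠ 0) :
    recipInv (∑ i, u i * f ^ (i : ℕ)) ∉ q := by
  induction n with
  | zero => simp at hc
  | succ n ih =>
    rw [Fin.sum_mul_pow_succ] at hc ⊢
    refine recipInv_add_mul_notMem hq hfq (hu 0) ?_ hc
    exact (em _).imp_right (ih _ (fun i => hu i.succ))

lemma ESimple.recipInv_notMem_of_algebraic_relation (hD : ESimple D) {g : D}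
    (hfK : ¬ InMaxSubfield f) (hg : g ≠ 0) {n m : ℕ} (u : Fin n → Fin m → D)
    (huK : ∀ i j, InMaxSubfield (u i j)) (hunz : ∃ i j, u i j ≠ 0)
    (hrel : ∑ i, ∑ j, u i j * f ^ (i : ℕ) * g ^ (j : ℕ) = 0)
    (hq : q.IsPrime) (hfq : recipInv f ∉ q) : recipInv g ∉ q := by
  set c : Fin m → D := fun j => ∑ i, u i j * f ^ (i : ℕ)
  have hrel_g : ∑ j, c j * g ^ (j : ℕ) = 0 := by
    simpa only [c, Finset.sum_mul] using (Finset.sum_comm.symm.trans hrel)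
  have hc : c ≠ 0 := by
    obtain ⟨i, j, hij⟩ := hunz
    intro hc
    exact hij (congrFun (hD.eq_zero_of_sum_mul_pow_eq_zero hfK _ (huK · j) (congrFun hc j)) i)
  obtain ⟨j, hcj, w, hw⟩ := exists_ne_zero_dvd_of_sum_mul_pow_eq_zero hg c hrel_g hc
  intro hgq
  apply recipInv_notMem_of_sum_mul_pow hq hfq (u · j) (huK · j) hcj
  change recipInv (c j) ∈ q
  rw [hw, recipInv_mul]
  exact q.mul_mem_right _ hgq

end ESimple

/-- Let `D` be an E-simple domain with maximal subfield `K`, and let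
`f, g ∈ D \ K` be algebraically dependent over `K` (there is a nontrivial polynomial
relation `∑ u_{ij} f^i g^j = 0` with coefficients `u_{ij} ∈ K`).  Then `p_f = p_g`. -/
theorem stmt_18 {D : Type*} [CommRing D] [IsDomain D] (hD : ESimple D)
    (f g : D) (hf : f ≠ 0) (hg : g ≠ 0)
    (hfK : ¬ InMaxSubfield f) (hgK : ¬ InMaxSubfield g)
    (n m : ℕ) (u : Fin n → Fin m → D)
    (huK : ∀ i j, InMaxSubfield (u i j))
    (hunz : ∃ i j, u i j ≠ 0)
    (hrel : ∑ i, ∑ j, u i j * f ^ (i : ℕ) * g ^ (j : ℕ) = 0)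
    (pf pg : Ideal (recip D)) (hpf : IsPx f hf pf) (hpg : IsPx g hg pg) :
    pf = pg := by
  obtain ⟨hpf_prime, hfpf, hpf_max⟩ := hpf
  obtain ⟨hpg_prime, hgpg, hpg_max⟩ := hpg
  have hrel_swap : ∑ j, ∑ i, u i j * g ^ (j : ℕ) * f ^ (i : ℕ) = 0 := by
    rw [Finset.sum_comm]
    simpa only [mul_right_comm] using hrel
  have hgpf : recipInv g ∉ pf :=
    hD.recipInv_notMem_of_algebraic_relation hfK hg u huK hunz hrel hpf_prime hfpf
  have hfpg : recipInv f ∉ pg :=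
    hD.recipInv_notMem_of_algebraic_relation hgK hf (fun j i => u i j) (fun j i => huK i j)
      (by obtain ⟨i, j, hij⟩ := hunz; exact ⟨j, i, hij⟩) hrel_swap hpg_prime hgpg
  exact le_antisymm (hpg_max pf hpf_prime hgpf) (hpf_max pg hpg_prime hfpg)
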